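/- arXiv:2504.12534 — 2 statements merged into one kernel-verified Lean document; each statement's English description precedes it below -/
import Mathlib

section
/- For every j ∈ ℕ, every x ∈ Λ_j and every integer k with 0 ≤ k ≤ j, one has F(ψ(G^k(x))) = λ^{−k} · F(ψ(x)); equivalently, φ_α(G^k(x)) = λ^{k/α} · φ_α(x) whenever F(ψ(x)) > 0. (Deterministic core of Proposition 4.6: the spectral process takes the values Θ_k = (1−θ)^{k/α} with 1−θ = λ.) -/
open Set MeasureTheory Filter
open scoped ENNReal Topology Classical

/-- The setup of Section 2 of the paper: a full-branched Markov linear map `G` on `[0,1]`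
with branch domains `I_1,…,I_{k_I}` (mapped affinely onto `[0,1]`) and complementary
intervals `J_j` (mapped affinely onto `(0,1)`), all of length at most `1/2`. -/
structure CantorData where
  kI : ℕ
  hkI : 1 ≤ kI
  a : ℕ → ℝ
  ha_lt : ∀ i, i + 1 < 2 * kI → a i < a (i + 1)
  ha0 : 0 ≤ a 0
  ha1 : a (2 * kI - 1) ≤ 1
  G : ℝ → ℝ
  hGmaps : Set.MapsTo G (Set.Icc 0 1) (Set.Icc 0 1)
  hGI : ∀ i < kI, ∃ s c : ℝ,
    |s| * (a (2 * i + 1) - a (2 * i)) = 1 ∧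
    (∀ x ∈ Set.Icc (a (2 * i)) (a (2 * i + 1)), G x = s * x + c) ∧
    Set.BijOn G (Set.Icc (a (2 * i)) (a (2 * i + 1))) (Set.Icc 0 1)
  hGJmid : ∀ i, i + 1 < kI → ∃ s c : ℝ,
    |s| * (a (2 * i + 2) - a (2 * i + 1)) = 1 ∧
    (∀ x ∈ Set.Ioo (a (2 * i + 1)) (a (2 * i + 2)), G x = s * x + c) ∧
    Set.SurjOn G (Set.Ioo (a (2 * i + 1)) (a (2 * i + 2))) (Set.Ioo 0 1)
  hGJleft : 0 < a 0 → ∃ s c : ℝ,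
    |s| * a 0 = 1 ∧
    (∀ x ∈ Set.Ico 0 (a 0), G x = s * x + c) ∧
    Set.SurjOn G (Set.Ico 0 (a 0)) (Set.Ioo 0 1)
  hGJright : a (2 * kI - 1) < 1 → ∃ s c : ℝ,
    |s| * (1 - a (2 * kI - 1)) = 1 ∧
    (∀ x ∈ Set.Ioc (a (2 * kI - 1)) 1, G x = s * x + c) ∧
    Set.SurjOn G (Set.Ioc (a (2 * kI - 1)) 1) (Set.Ioo 0 1)
  hIlen : ∀ i < kI, a (2 * i + 1) - a (2 * i) ≤ 1 / 2
  hJlenL : a 0 ≤ 1 / 2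
  hJlenR : 1 - a (2 * kI - 1) ≤ 1 / 2
  hJlenM : ∀ i, i + 1 < kI → a (2 * i + 2) - a (2 * i + 1) ≤ 1 / 2
  hkJ : (Set.Icc (0:ℝ) 1 \ ⋃ i ∈ Finset.range kI,
      Set.Icc (a (2 * i)) (a (2 * i + 1))).Nonempty

namespace CantorData

variable (S : CantorData)

/-- The union `⋃_i I_i` of the branch domains forming the Cantor construction. -/
def IU : Set ℝ := ⋃ i ∈ Finset.range S.kI, Set.Icc (S.a (2 * i)) (S.a (2 * i + 1))

/-- `Λ_n = {x ∈ [0,1] : G^{i-1}(x) ∈ ⋃ I for all 1 ≤ i ≤ n}`. -/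
def Lam (n : ℕ) : Set ℝ := {x ∈ Set.Icc (0:ℝ) 1 | ∀ i < n, S.G^[i] x ∈ S.IU}

/-- The dynamically defined Cantor set `Λ = ⋂_n Λ_n`. -/
def Cantor : Set ℝ := ⋂ n : ℕ, S.Lam n

/-- `λ = |⋃ I_i| = Σ_i 1/m_i`. -/
noncomputable def lam : ℝ := ∑ i ∈ Finset.range S.kI, (S.a (2 * i + 1) - S.a (2 * i))

/-- `𝔪`, Lebesgue measure on `[0,1]`. -/
noncomputable def mes (_S : CantorData) : Measure ℝ := volume.restrict (Set.Icc 0 1)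

/-- `ψ(x) = Σ_{i ∈ 𝓘_x} 2^{-i}` where `𝓘_x = {i ≥ 1 : G^{i-1}(x) ∉ ⋃ I}`. -/
noncomputable def psi (x : ℝ) : ℝ :=
  ∑' i : ℕ, if S.G^[i] x ∈ S.IU then 0 else (2:ℝ)⁻¹ ^ (i + 1)

/-- `F(t) = 𝔪{x : ψ(x) ≤ t}`, the distribution function of `ψ`. -/
noncomputable def F (t : ℝ) : ℝ := (S.mes {x | S.psi x ≤ t}).toReal

/-- `φ_α = (F ∘ ψ)^{-1/α}`, with value `∞` where `F ∘ ψ` vanishes. -/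
noncomputable def phi (α : ℝ) (x : ℝ) : ℝ≥0∞ :=
  ENNReal.ofReal (S.F (S.psi x)) ^ (-(1 / α))

/-- `X_n = φ_α ∘ G^n`. -/
noncomputable def X (α : ℝ) (n : ℕ) (x : ℝ) : ℝ≥0∞ := S.phi α (S.G^[n] x)

/-- `P_n`: the points following the Cantor construction exactly `n` steps and
never entering `⋃ I` afterwards. -/
def Pset (n : ℕ) : Set ℝ :=
  {x ∈ Set.Icc (0:ℝ) 1 | (∀ i < n, S.G^[i] x ∈ S.IU) ∧ ∀ i, n ≤ i → S.G^[i] x ∉ S.IU}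

/-- The family of partition intervals `(I,J)_1,…,(I,J)_{k_I+k_J}`. -/
def PieceFamily : Set (Set ℝ) :=
  ((fun i => Set.Icc (S.a (2 * i)) (S.a (2 * i + 1))) '' Set.Iio S.kI) ∪
  ((fun i => Set.Ioo (S.a (2 * i + 1)) (S.a (2 * i + 2))) '' {i | i + 1 < S.kI}) ∪
  {Set.Ico (0:ℝ) (S.a 0), Set.Ioc (S.a (2 * S.kI - 1)) 1}

/-- The depth-`d` cylinder `C_w = ⋂_{k=1}^d G^{-(k-1)}((I,J)_{w_k})`. -/
def Cyl (d : ℕ) (w : ℕ → Set ℝ) : Set ℝ := ⋂ k ∈ Finset.range d, (S.G^[k]) ⁻¹' (w k)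

/-- `C` is a depth-`d` cylinder. -/
def IsCylinder (d : ℕ) (C : Set ℝ) : Prop :=
  ∃ w : ℕ → Set ℝ, (∀ k < d, w k ∈ S.PieceFamily) ∧ C = S.Cyl d w

/-- `Υ⁺(A,d)`: union of the depth-`d` cylinders meeting `A`. -/
def upApprox (A : Set ℝ) (d : ℕ) : Set ℝ :=
  ⋃₀ {C | S.IsCylinder d C ∧ (C ∩ A).Nonempty}

/-- `Υ⁻(A,d)`: union of the depth-`d` cylinders contained in `A`. -/
def lowApprox (A : Set ℝ) (d : ℕ) : Set ℝ :=
  ⋃₀ {C | S.IsCylinder d C ∧ C ⊆ A}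

/-- `u_n(τ) = (n/τ)^{1/α}`. -/
noncomputable def un (_S : CantorData) (α τ : ℝ) (n : ℕ) : ℝ := ((n : ℝ) / τ) ^ (1 / α)

/-- `U_n(τ) = {X_0 > u_n(τ)}`. -/
noncomputable def Un (α τ : ℝ) (n : ℕ) : Set ℝ :=
  {x ∈ Set.Icc (0:ℝ) 1 | ENNReal.ofReal (S.un α τ n) < S.X α 0 x}

/-- `U_n^{(1)}(τ) = U_n(τ) ∩ G^{-1}([0,1] ∖ U_n(τ))`. -/
noncomputable def Un1 (α τ : ℝ) (n : ℕ) : Set ℝ :=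
  S.Un α τ n ∩ S.G ⁻¹' (Set.Icc 0 1 \ S.Un α τ n)

/-- `U_n(τ',τ'') = U_n(τ') ∖ U_n(τ'')`. -/
noncomputable def UnPair (α τ' τ'' : ℝ) (n : ℕ) : Set ℝ := S.Un α τ' n \ S.Un α τ'' n

/-- `U_n(τ',τ'')^{(1)}`. -/
noncomputable def UnPair1 (α τ' τ'' : ℝ) (n : ℕ) : Set ℝ :=
  S.UnPair α τ' τ'' n ∩ S.G ⁻¹' (Set.Icc 0 1 \ S.UnPair α τ' τ'' n)

/-- `j_{n,τ}`: the least `j` with `λ^j ≤ τ/n`. -/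
noncomputable def jn (τ : ℝ) (n : ℕ) : ℕ := sInf {j : ℕ | S.lam ^ j ≤ τ / n}

/-- `Γ_n^+`: outer approximation of `U_n(τ',τ'')^{(1)}` by depth-`2 j_{n,τ'}` cylinders. -/
noncomputable def GammaPlus (α τ' τ'' : ℝ) (n : ℕ) : Set ℝ :=
  S.upApprox (S.UnPair1 α τ' τ'' n) (2 * S.jn τ' n)

/-- `Γ_n^-`: inner approximation of `U_n(τ',τ'')^{(1)}` by depth-`2 j_{n,τ'}` cylinders. -/
noncomputable def GammaMinus (α τ' τ'' : ℝ) (n : ℕ) : Set ℝ :=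
  S.lowApprox (S.UnPair1 α τ' τ'' n) (2 * S.jn τ' n)

end CantorData


/-!
On each branch `I_i` the coding `ψ` simply shifts, `ψ x = ψ (G x) / 2`, while `ψ x ≥ 1/2`
off `⋃ I_i`. An affine branch pulls a set `A ⊆ [0,1]` back to a set of measure `|I_i| 𝔪(A)`,
so `{ψ ≤ t/2}` has measure `λ 𝔪{ψ ≤ t}`, up to the points `x ∉ ⋃ I_i` with `G x ∈ Λ`; these
form a null set because `𝔪(Λ_n) = λ^n` and `λ < 1`. Hence `F(t/2) = λ F(t)`, and following
the orbit of `x ∈ Λ_k` gives `F(ψ x) = λ^k F(ψ(G^k x))`.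
-/

lemma volume_preimage_affine {s : ℝ} (hs : s ≠ 0) (c : ℝ) (C : Set ℝ) :
    volume ((fun x => s * x + c) ⁻¹' C) = ENNReal.ofReal |s|⁻¹ * volume C := by
  change volume ((fun x => s * x) ⁻¹' ((fun y => y + c) ⁻¹' C)) = _
  rw [Real.volume_preimage_mul_left hs, measure_preimage_add_right, abs_inv]

lemma Set.EqOn.inter_preimage_eq_preimage_of_surjOn {α β : Type*} {f g : α → β} {p : Set α}
    {D C : Set β} (hfg : EqOn f g p) (hg : Function.Injective g) (hf : SurjOn f p D)
    (hC : C ⊆ D) : p ∩ f ⁻¹' C = g ⁻¹' C := by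
  rw [hfg.inter_preimage_eq]
  refine inter_eq_right.2 fun y hy => ?_
  obtain ⟨y', hy', hfy'⟩ := hf (hC hy)
  rwa [← hg (hfg hy' ▸ hfy' : g y' = g y)]

lemma measurable_tsum_of_summable {α : Type*} [MeasurableSpace α] {f : ℕ → α → ℝ}
    (hf : ∀ i, Measurable (f i)) (hs : ∀ x, Summable (f · x)) :
    Measurable fun x => ∑' i, f i x :=
  measurable_of_tendsto_metrizable (fun _ => Finset.measurable_sum _ fun i _ => hf i)
    (tendsto_pi_nhds.2 fun x => (hs x).hasSum.tendsto_sum_nat)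

def PiecewiseAffineOn (f : ℝ → ℝ) (D : Set ℝ) : Prop :=
  ∃ P : Set (Set ℝ), P.Countable ∧ D ⊆ ⋃₀ P ∧
    ∀ p ∈ P, MeasurableSet p ∧ ∃ s c : ℝ, s ≠ 0 ∧ EqOn f (fun x => s * x + c) p

namespace PiecewiseAffineOn

variable {f : ℝ → ℝ} {D C : Set ℝ}

lemma inter_preimage_subset {P : Set (Set ℝ)} (hDP : D ⊆ ⋃₀ P) :
    D ∩ f ⁻¹' C ⊆ ⋃ p ∈ P, p ∩ f ⁻¹' C := by
  rintro x ⟨hxD, hxC⟩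
  obtain ⟨p, hp, hxp⟩ := hDP hxD
  exact mem_biUnion hp ⟨hxp, hxC⟩

lemma measurableSet_inter_preimage (hf : PiecewiseAffineOn f D) (hD : MeasurableSet D)
    (hC : MeasurableSet C) : MeasurableSet (D ∩ f ⁻¹' C) := by
  obtain ⟨P, hPc, hDP, hP⟩ := hf
  have hsplit : D ∩ f ⁻¹' C = D ∩ ⋃ p ∈ P, p ∩ f ⁻¹' C :=
    subset_antisymm (subset_inter inter_subset_left (inter_preimage_subset hDP))
      (inter_subset_inter_right _ (iUnion₂_subset fun _ _ => inter_subset_right))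
  rw [hsplit]
  refine hD.inter (.biUnion hPc fun p hp => ?_)
  obtain ⟨hpm, s, c, -, hfp⟩ := hP p hp
  rw [hfp.inter_preimage_eq]
  exact hpm.inter (((measurable_id.const_mul s).add_const c) hC)

lemma measure_inter_preimage_null (hf : PiecewiseAffineOn f D) (hC : volume C = 0) :
    volume (D ∩ f ⁻¹' C) = 0 := by
  obtain ⟨P, hPc, hDP, hP⟩ := hf
  refine measure_mono_null (inter_preimage_subset hDP)
    ((measure_biUnion_null_iff hPc).2 fun p hp => ?_)
  obtain ⟨-, s, c, hs, hfp⟩ := hP p hp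
  rw [hfp.inter_preimage_eq]
  exact measure_mono_null inter_subset_right (by rw [volume_preimage_affine hs, hC, mul_zero])

end PiecewiseAffineOn

lemma hasSum_inv_two_pow_succ : HasSum (fun i : ℕ => (2 : ℝ)⁻¹ ^ (i + 1)) 1 := by
  simpa [pow_succ, div_eq_mul_inv, mul_comm] using hasSum_geometric_two' 1

lemma ENNReal.ofReal_mul_rpow_of_pos {c : ℝ} (hc : 0 < c) (y β : ℝ) :
    ENNReal.ofReal (c * y) ^ β = ENNReal.ofReal (c ^ β) * ENNReal.ofReal y ^ β := by
  rw [ENNReal.ofReal_mul hc.le, ENNReal.mul_rpow_of_ne_top ofReal_ne_top ofReal_ne_top,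
    ENNReal.ofReal_rpow_of_pos hc]

namespace CantorData

variable (S : CantorData)

lemma a_strictMonoOn : StrictMonoOn S.a (Iic (2 * S.kI - 1)) :=
  strictMonoOn_Iic_of_lt_succ fun m hm => by
    simpa using S.ha_lt m (by have := S.hkI; omega)

variable {S} in
lemma a_lt_a {p q : ℕ} (hpq : p < q) (hq : q ≤ 2 * S.kI - 1) : S.a p < S.a q :=
  S.a_strictMonoOn (mem_Iic.2 (by omega)) hq hpq

variable {S} in
lemma a_le_a {p q : ℕ} (hpq : p ≤ q) (hq : q ≤ 2 * S.kI - 1) : S.a p ≤ S.a q :=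
  S.a_strictMonoOn.monotoneOn (mem_Iic.2 (by omega)) hq hpq

variable {S} in
lemma a_mem_Icc {q : ℕ} (hq : q ≤ 2 * S.kI - 1) : S.a q ∈ Icc (0 : ℝ) 1 :=
  ⟨S.ha0.trans (a_le_a q.zero_le hq), (a_le_a hq le_rfl).trans S.ha1⟩

lemma IU_subset_Icc : S.IU ⊆ Icc 0 1 := by
  simp only [IU, Finset.mem_range, iUnion_subset_iff]
  exact fun i hi => Icc_subset_Icc (a_mem_Icc (by omega)).1 (a_mem_Icc (by omega)).2

lemma isClosed_IU : IsClosed S.IU := isClosed_biUnion_finset fun _ _ => isClosed_Icc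

lemma measurableSet_IU : MeasurableSet S.IU := S.isClosed_IU.measurableSet

lemma pairwiseDisjoint_branches : (↑(Finset.range S.kI) : Set ℕ).PairwiseDisjoint
    fun i => Icc (S.a (2 * i)) (S.a (2 * i + 1)) := by
  have key : ∀ i j, i < j → j < S.kI →
      Disjoint (Icc (S.a (2 * i)) (S.a (2 * i + 1))) (Icc (S.a (2 * j)) (S.a (2 * j + 1))) :=
    fun i j hij hj => disjoint_left.2 fun x hxi hxj => by
      have := a_lt_a (S := S) (show 2 * i + 1 < 2 * j by omega) (by omega)
      linarith [hxi.2, hxj.1]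
  intro i hi j hj hij
  simp only [Finset.coe_range, mem_Iio] at hi hj
  rcases hij.lt_or_gt with h | h
  · exact key i j h hj
  · exact (key j i h hi).symm

lemma exists_affine_of_mem_pieceFamily {p : Set ℝ} (hp : p ∈ S.PieceFamily) :
    ∃ s c : ℝ, s ≠ 0 ∧ EqOn S.G (fun x => s * x + c) p := by
  have slope_ne_zero : ∀ {s L : ℝ}, |s| * L = 1 → s ≠ 0 := fun h hs => by simp [hs] at h
  rcases hp with (⟨i, hi, rfl⟩ | ⟨i, hi, rfl⟩) | hp
  · obtain ⟨s, c, hs, hG, -⟩ := S.hGI i hi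
    exact ⟨s, c, slope_ne_zero hs, fun x hx => hG x hx⟩
  · obtain ⟨s, c, hs, hG, -⟩ := S.hGJmid i hi
    exact ⟨s, c, slope_ne_zero hs, fun x hx => hG x hx⟩
  rcases hp with rfl | rfl
  · by_cases h : 0 < S.a 0
    · obtain ⟨s, c, hs, hG, -⟩ := S.hGJleft h
      exact ⟨s, c, slope_ne_zero hs, fun x hx => hG x hx⟩
    · exact ⟨1, 0, one_ne_zero, by simp [Ico_eq_empty h]⟩
  · by_cases h : S.a (2 * S.kI - 1) < 1
    · obtain ⟨s, c, hs, hG, -⟩ := S.hGJright h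
      exact ⟨s, c, slope_ne_zero hs, fun x hx => hG x hx⟩
    · exact ⟨1, 0, one_ne_zero, by simp [Ioc_eq_empty h]⟩

lemma mem_sUnion_pieceFamily_of_le {x : ℝ} (h0 : S.a 0 ≤ x) :
    ∀ i < S.kI, x ≤ S.a (2 * i + 1) → x ∈ ⋃₀ S.PieceFamily := by
  intro i
  induction i with
  | zero => exact fun hi h1 => ⟨_, Or.inl (Or.inl ⟨0, hi, rfl⟩), h0, h1⟩
  | succ n ih =>
    intro hn h1
    by_cases hle : x ≤ S.a (2 * n + 1)
    · exact ih (by omega) hle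
    by_cases hlt : x < S.a (2 * n + 2)
    · exact ⟨_, Or.inl (Or.inr ⟨n, hn, rfl⟩), not_le.1 hle, hlt⟩
    · exact ⟨_, Or.inl (Or.inl ⟨n + 1, hn, rfl⟩), not_lt.1 hlt, h1⟩

lemma Icc_subset_sUnion_pieceFamily : Icc 0 1 ⊆ ⋃₀ S.PieceFamily := by
  intro x hx
  by_cases h0 : x < S.a 0
  · exact ⟨_, Or.inr (Or.inl rfl), hx.1, h0⟩
  by_cases h1 : S.a (2 * S.kI - 1) < x
  · exact ⟨_, Or.inr (Or.inr rfl), h1, hx.2⟩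
  have hk := S.hkI
  exact S.mem_sUnion_pieceFamily_of_le (not_lt.1 h0) (S.kI - 1) (by omega)
    (by rw [show 2 * (S.kI - 1) + 1 = 2 * S.kI - 1 by omega]; exact not_lt.1 h1)

lemma piecewiseAffineOn_G : PiecewiseAffineOn S.G (Icc 0 1) := by
  refine ⟨S.PieceFamily, ?_, S.Icc_subset_sUnion_pieceFamily, fun p hp =>
    ⟨?_, S.exists_affine_of_mem_pieceFamily hp⟩⟩
  · exact (((to_countable _).image _).union ((to_countable _).image _)).union
      (toFinite _).countable
  · rcases hp with (⟨i, -, rfl⟩ | ⟨i, -, rfl⟩) | rfl | rfl <;> measurability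

lemma measurableSet_Icc_inter_preimage_iterate {C : Set ℝ} (hC : MeasurableSet C) (n : ℕ) :
    MeasurableSet (Icc 0 1 ∩ S.G^[n] ⁻¹' C) := by
  induction n with
  | zero => exact measurableSet_Icc.inter hC
  | succ n ih =>
    have hshift :
        Icc 0 1 ∩ S.G^[n + 1] ⁻¹' C = Icc 0 1 ∩ S.G ⁻¹' (Icc 0 1 ∩ S.G^[n] ⁻¹' C) := by
      rw [Function.iterate_succ, preimage_comp, preimage_inter, ← inter_assoc,
        inter_eq_left.2 S.hGmaps.subset_preimage]
    rw [hshift]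
    exact S.piecewiseAffineOn_G.measurableSet_inter_preimage measurableSet_Icc ih

lemma volume_IU_inter_preimage {A : Set ℝ} (hA : MeasurableSet A) (hA01 : A ⊆ Icc 0 1) :
    volume (S.IU ∩ S.G ⁻¹' A) = ENNReal.ofReal S.lam * volume A := by
  have hbranch : ∀ i ∈ Finset.range S.kI, ∃ s c : ℝ, s ≠ 0 ∧
      |s|⁻¹ = S.a (2 * i + 1) - S.a (2 * i) ∧
      Icc (S.a (2 * i)) (S.a (2 * i + 1)) ∩ S.G ⁻¹' A = (fun x => s * x + c) ⁻¹' A := by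
    intro i hi
    obtain ⟨s, c, hlen, hG, hbij⟩ := S.hGI i (Finset.mem_range.1 hi)
    have hs : s ≠ 0 := fun hs => by simp [hs] at hlen
    exact ⟨s, c, hs, inv_eq_of_mul_eq_one_right hlen,
      EqOn.inter_preimage_eq_preimage_of_surjOn (fun x hx => hG x hx)
        (fun x y h => mul_left_cancel₀ hs (add_right_cancel h)) hbij.surjOn hA01⟩
  have hmeas : ∀ i ∈ Finset.range S.kI,
      MeasurableSet (Icc (S.a (2 * i)) (S.a (2 * i + 1)) ∩ S.G ⁻¹' A) := fun i hi => by
    obtain ⟨s, c, -, -, heq⟩ := hbranch i hi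
    exact heq ▸ ((measurable_id.const_mul s).add_const c) hA
  have hvol : ∀ i ∈ Finset.range S.kI,
      volume (Icc (S.a (2 * i)) (S.a (2 * i + 1)) ∩ S.G ⁻¹' A) =
        ENNReal.ofReal (S.a (2 * i + 1) - S.a (2 * i)) * volume A := fun i hi => by
    obtain ⟨s, c, hs, hlen, heq⟩ := hbranch i hi
    rw [heq, volume_preimage_affine hs, hlen]
  rw [IU, iUnion₂_inter, measure_biUnion_finset
      (S.pairwiseDisjoint_branches.mono fun _ => inter_subset_left) hmeas,
    Finset.sum_congr rfl hvol, ← Finset.sum_mul, lam,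
    ENNReal.ofReal_sum_of_nonneg fun i hi => sub_nonneg.2 (a_le_a (by omega) (by
      have := Finset.mem_range.1 hi; omega))]

lemma volume_IU : volume S.IU = ENNReal.ofReal S.lam := by
  have hIU : S.IU ∩ S.G ⁻¹' Icc 0 1 = S.IU :=
    inter_eq_left.2 (S.IU_subset_Icc.trans S.hGmaps.subset_preimage)
  rw [← hIU, S.volume_IU_inter_preimage measurableSet_Icc subset_rfl, Real.volume_Icc]
  simp

lemma lam_pos : 0 < S.lam :=
  Finset.sum_pos (fun i hi => sub_pos.2 (a_lt_a (by omega) (by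
    have := Finset.mem_range.1 hi; omega))) ⟨0, Finset.mem_range.2 S.hkI⟩

lemma lam_lt_one : S.lam < 1 := by
  have hgap : (Ioo 0 1 \ S.IU).Nonempty := by
    by_contra h
    rw [not_nonempty_iff_eq_empty, sdiff_eq_empty] at h
    obtain ⟨x, hx, hxIU⟩ := S.hkJ
    exact hxIU (S.isClosed_IU.closure_subset_iff.2 h (by rwa [closure_Ioo zero_ne_one]))
  have hpos : 0 < volume (Ioo 0 1 \ S.IU) := (isOpen_Ioo.sdiff S.isClosed_IU).measure_pos _ hgap
  have hle : volume S.IU + volume (Ioo 0 1 \ S.IU) ≤ 1 := by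
    rw [← measure_union disjoint_sdiff_right (measurableSet_Ioo.diff S.measurableSet_IU)]
    calc volume (S.IU ∪ Ioo 0 1 \ S.IU) ≤ volume (Icc (0 : ℝ) 1) :=
          measure_mono (union_subset S.IU_subset_Icc (sdiff_subset.trans Ioo_subset_Icc_self))
      _ = 1 := by simp
  rw [S.volume_IU] at hle
  exact ENNReal.ofReal_lt_one.1
    ((ENNReal.lt_add_right ENNReal.ofReal_ne_top hpos.ne').trans_le hle)

lemma Lam_zero : S.Lam 0 = Icc 0 1 := by ext; simp [Lam]

lemma Lam_succ (n : ℕ) : S.Lam (n + 1) = S.IU ∩ S.G ⁻¹' S.Lam n := by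
  ext x
  simp only [Lam, mem_inter_iff, mem_ofPred_eq, mem_preimage]
  constructor
  · rintro ⟨hx, h⟩
    exact ⟨h 0 n.succ_pos, S.hGmaps hx, fun i hi => h (i + 1) (by omega)⟩
  · rintro ⟨hIU, -, h⟩
    refine ⟨S.IU_subset_Icc hIU, fun i hi => ?_⟩
    rcases i with _ | i
    exacts [hIU, h i (by omega)]

lemma Lam_antitone : Antitone S.Lam :=
  fun _ _ hkj _ hx => ⟨hx.1, fun i hi => hx.2 i (by omega)⟩

lemma measurableSet_Lam (n : ℕ) : MeasurableSet (S.Lam n) := by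
  induction n with
  | zero => exact S.Lam_zero ▸ measurableSet_Icc
  | succ n ih =>
    rw [S.Lam_succ, ← inter_eq_left.2 S.IU_subset_Icc, inter_assoc]
    exact S.measurableSet_IU.inter
      (S.piecewiseAffineOn_G.measurableSet_inter_preimage measurableSet_Icc ih)

lemma volume_Lam (n : ℕ) : volume (S.Lam n) = ENNReal.ofReal S.lam ^ n := by
  induction n with
  | zero => simp [Lam_zero]
  | succ n ih =>
    rw [S.Lam_succ, S.volume_IU_inter_preimage (S.measurableSet_Lam n) (fun _ hx => hx.1), ih,
      pow_succ']

lemma volume_Cantor : volume S.Cantor = 0 := by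
  refine le_antisymm (ge_of_tendsto' (ENNReal.tendsto_pow_atTop_nhds_zero_of_lt_one
    (ENNReal.ofReal_lt_one.2 S.lam_lt_one)) fun n => ?_) zero_le
  exact S.volume_Lam n ▸ measure_mono (iInter_subset _ n)

noncomputable def psiTerm (x : ℝ) (i : ℕ) : ℝ :=
  if S.G^[i] x ∈ S.IU then 0 else (2 : ℝ)⁻¹ ^ (i + 1)

lemma psi_eq_tsum (x : ℝ) : S.psi x = ∑' i, S.psiTerm x i := rfl

lemma psiTerm_nonneg (x : ℝ) (i : ℕ) : 0 ≤ S.psiTerm x i := by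
  unfold psiTerm; split_ifs <;> positivity

lemma psiTerm_le (x : ℝ) (i : ℕ) : S.psiTerm x i ≤ (2 : ℝ)⁻¹ ^ (i + 1) := by
  unfold psiTerm; split_ifs <;> first | positivity | rfl

lemma summable_psiTerm (x : ℝ) : Summable (S.psiTerm x) :=
  .of_nonneg_of_le (S.psiTerm_nonneg x) (S.psiTerm_le x) hasSum_inv_two_pow_succ.summable

lemma psi_nonneg (x : ℝ) : 0 ≤ S.psi x := tsum_nonneg (S.psiTerm_nonneg x)

lemma psi_le_one (x : ℝ) : S.psi x ≤ 1 :=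
  hasSum_le (S.psiTerm_le x) (S.summable_psiTerm x).hasSum hasSum_inv_two_pow_succ

lemma psi_eq_zero_iff {x : ℝ} : S.psi x = 0 ↔ ∀ i, S.G^[i] x ∈ S.IU := by
  rw [psi_eq_tsum, ← (S.summable_psiTerm x).hasSum_iff,
    hasSum_zero_iff_of_nonneg (S.psiTerm_nonneg x), funext_iff]
  exact forall_congr' fun i => by simp [psiTerm]

lemma psi_eq_add_psi_G (x : ℝ) :
    S.psi x = (if x ∈ S.IU then 0 else 2⁻¹) + S.psi (S.G x) / 2 := by
  rw [psi_eq_tsum, (S.summable_psiTerm x).tsum_eq_zero_add, psi_eq_tsum, div_eq_inv_mul,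
    ← tsum_mul_left]
  congr 1
  · simp [psiTerm]
  · refine tsum_congr fun i => ?_
    by_cases h : S.G^[i] (S.G x) ∈ S.IU
    · simp [psiTerm, h]
    · simp only [psiTerm, Function.iterate_succ_apply, h, if_false]
      ring

lemma psi_of_mem_IU {x : ℝ} (hx : x ∈ S.IU) : S.psi x = S.psi (S.G x) / 2 := by
  simp [S.psi_eq_add_psi_G x, hx]

lemma measurableSet_Icc_inter_psi_le (t : ℝ) : MeasurableSet (Icc 0 1 ∩ {x | S.psi x ≤ t}) := by
  have hψ : Measurable fun y : Icc (0 : ℝ) 1 => S.psi y := by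
    refine measurable_tsum_of_summable (fun i => Measurable.ite ?_ measurable_const
      measurable_const) fun y => S.summable_psiTerm y
    have h := measurable_subtype_coe (p := (· ∈ Icc (0 : ℝ) 1))
      (S.measurableSet_Icc_inter_preimage_iterate S.measurableSet_IU i)
    rwa [preimage_inter, Subtype.coe_preimage_self, univ_inter] at h
  rw [← Subtype.image_preimage_coe]
  exact measurableSet_Icc.subtype_image (hψ measurableSet_Iic)

lemma mem_Cantor_of_psi_eq_zero {x : ℝ} (hx : x ∈ Icc 0 1) (h : S.psi x = 0) :
    x ∈ S.Cantor :=
  mem_iInter.2 fun _ => ⟨hx, fun i _ => S.psi_eq_zero_iff.1 h i⟩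

lemma volume_psi_le_half {t : ℝ} (ht : t ≤ 1) :
    volume (Icc 0 1 ∩ {x | S.psi x ≤ t / 2}) =
      ENNReal.ofReal S.lam * volume (Icc 0 1 ∩ {x | S.psi x ≤ t}) := by
  set E := Icc 0 1 ∩ {x | S.psi x ≤ t / 2}
  set B := S.IU ∩ S.G ⁻¹' (Icc 0 1 ∩ {x | S.psi x ≤ t})
  set Z := Icc 0 1 ∩ S.G ⁻¹' S.Cantor
  have hBE : B ⊆ E := fun y ⟨hy, _, hGy⟩ =>
    ⟨S.IU_subset_Icc hy, by simp only [mem_ofPred_eq, S.psi_of_mem_IU hy] at hGy ⊢; linarith⟩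
  -- off `⋃ I_i` we have `ψ ≥ 1/2`, so `ψ ≤ t/2` forces `ψ ∘ G = 0`
  have hEBZ : E ⊆ B ∪ Z := by
    rintro y ⟨hy, hψy⟩
    have hψ := S.psi_eq_add_psi_G y
    by_cases hIU : y ∈ S.IU
    · simp only [hIU, if_true, mem_ofPred_eq] at hψ hψy
      exact Or.inl ⟨hIU, S.hGmaps hy, by simp only [mem_ofPred_eq]; linarith⟩
    · simp only [hIU, if_false, mem_ofPred_eq] at hψ hψy
      have hψG : S.psi (S.G y) = 0 := le_antisymm (by linarith) (S.psi_nonneg _)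
      exact Or.inr ⟨hy, S.mem_Cantor_of_psi_eq_zero (S.hGmaps hy) hψG⟩
  have hZ : volume Z = 0 := S.piecewiseAffineOn_G.measure_inter_preimage_null S.volume_Cantor
  have hEB : volume E = volume B := le_antisymm
    ((measure_mono hEBZ).trans ((measure_union_le B Z).trans (by rw [hZ, add_zero])))
    (measure_mono hBE)
  rw [hEB, S.volume_IU_inter_preimage (S.measurableSet_Icc_inter_psi_le t) inter_subset_left]

lemma F_half {t : ℝ} (ht : t ≤ 1) : S.F (t / 2) = S.lam * S.F t := by
  simp only [F, mes, Measure.restrict_apply' measurableSet_Icc, inter_comm _ (Icc _ _)]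
  rw [S.volume_psi_le_half ht, ENNReal.toReal_mul, ENNReal.toReal_ofReal S.lam_pos.le]

lemma F_psi_of_mem_IU {x : ℝ} (hx : x ∈ S.IU) :
    S.F (S.psi x) = S.lam * S.F (S.psi (S.G x)) := by
  rw [S.psi_of_mem_IU hx, S.F_half (S.psi_le_one _)]

lemma F_psi_of_mem_Lam {k : ℕ} {x : ℝ} (hx : x ∈ S.Lam k) :
    S.F (S.psi x) = S.lam ^ k * S.F (S.psi (S.G^[k] x)) := by
  induction k generalizing x with
  | zero => simp
  | succ k ih =>
    rw [S.Lam_succ] at hx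
    rw [S.F_psi_of_mem_IU hx.1, ih hx.2, pow_succ', mul_assoc]
    rfl

end CantorData

theorem spectral_scaling_general (S : CantorData) (α : ℝ)
    (j : ℕ) (x : ℝ) (hx : x ∈ S.Lam j)
    (k : ℕ) (hk : k ≤ j) :
    S.F (S.psi (S.G^[k] x)) = S.lam ^ (-(k:ℤ)) * S.F (S.psi x) ∧
    (0 < S.F (S.psi x) →
      S.phi α (S.G^[k] x) = ENNReal.ofReal (S.lam ^ ((k:ℝ) / α)) * S.phi α x) := by
  have hlam := S.lam_pos
  have hF : S.F (S.psi (S.G^[k] x)) = S.lam ^ (-(k:ℤ)) * S.F (S.psi x) := by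
    rw [S.F_psi_of_mem_Lam (S.Lam_antitone hk hx), zpow_neg, zpow_natCast,
      inv_mul_cancel_left₀ (pow_ne_zero k hlam.ne')]
  refine ⟨hF, fun _ => ?_⟩
  have hpow : (S.lam ^ (-(k:ℤ))) ^ (-(1 / α)) = S.lam ^ ((k:ℝ) / α) := by
    rw [← Real.rpow_intCast, ← Real.rpow_mul hlam.le]
    push_cast
    ring_nf
  rw [CantorData.phi, CantorData.phi, hF, ENNReal.ofReal_mul_rpow_of_pos (zpow_pos hlam _), hpow]

/-- for `x ∈ Λ_j` and `0 ≤ k ≤ j`,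
`F(ψ(G^k x)) = λ^{-k} F(ψ(x))`; equivalently `φ_α(G^k x) = λ^{k/α} φ_α(x)`
whenever `F(ψ(x)) > 0`. -/
theorem spectral_scaling (S : CantorData) (α : ℝ)
    (hα : α ∈ Set.Ioo (0:ℝ) 2) (j : ℕ) (x : ℝ) (hx : x ∈ S.Lam j)
    (k : ℕ) (hk : k ≤ j) :
    S.F (S.psi (S.G^[k] x)) = S.lam ^ (-(k:ℤ)) * S.F (S.psi x) ∧
    (0 < S.F (S.psi x) →
      S.phi α (S.G^[k] x) = ENNReal.ofReal (S.lam ^ ((k:ℝ) / α)) * S.phi α x) :=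
  spectral_scaling_general S α j x hx k hk
end

section
/- Exact Markov independence for the full-branched linear map G: for every d ∈ ℕ, every word w = (w_1,…,w_d) with each w_k ∈ {1,…,k_I+k_J}, every integer j ≥ d and every Borel set A ⊆ [0,1], one has 𝔪(C_w ∩ G^{−j}(A)) = 𝔪(C_w)·𝔪(A). (This is the mixing estimate on cylinders used in the verification of conditions Д*_{q_n} and Д'*_{q_n}.) -/
open Set MeasureTheory Filter
open scoped ENNReal Topology Classical

section Helpers

open CantorData

lemma vol_union_null {μ : Measure ℝ} {s t : Set ℝ} (ht : μ t = 0) : μ (s ∪ t) = μ s :=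
  le_antisymm ((measure_union_le _ _).trans (by rw [ht, add_zero]))
    (measure_mono subset_union_left)

lemma a_mono (S : CantorData) {m n : ℕ} (h : m ≤ n) : n ≤ 2 * S.kI - 1 → S.a m ≤ S.a n := by
  induction h with
  | refl => exact fun _ => le_rfl
  | @step k h ih =>
      intro hk
      have hkI := S.hkI
      have h1 : S.a k < S.a (k + 1) := S.ha_lt k (by omega)
      exact le_trans (ih (by omega)) h1.le

lemma a_nonneg (S : CantorData) {n : ℕ} (hn : n ≤ 2 * S.kI - 1) : 0 ≤ S.a n :=
  le_trans S.ha0 (a_mono S (Nat.zero_le n) hn)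

lemma a_le_one (S : CantorData) {n : ℕ} (hn : n ≤ 2 * S.kI - 1) : S.a n ≤ 1 :=
  le_trans (a_mono S hn le_rfl) S.ha1

lemma piece_spec (S : CantorData) {P : Set ℝ} (hP : P ∈ S.PieceFamily) :
    P = ∅ ∨ ∃ p q s c : ℝ, p < q ∧ Ioo p q ⊆ P ∧ P ⊆ Icc p q ∧ Icc p q ⊆ Icc 0 1 ∧
      |s| * (q - p) = 1 ∧ ∀ x ∈ P, S.G x = s * x + c := by
  have hkI := S.hkI
  simp only [CantorData.PieceFamily, Set.mem_union, Set.mem_image, Set.mem_insert_iff,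
    Set.mem_singleton_iff, Set.mem_Iio, Set.mem_setOf_eq] at hP
  rcases hP with (⟨i, hi, rfl⟩ | ⟨i, hi, rfl⟩) | (rfl | rfl)
  · obtain ⟨s, c, hlen, hform, _⟩ := S.hGI i hi
    exact Or.inr ⟨S.a (2 * i), S.a (2 * i + 1), s, c, S.ha_lt (2 * i) (by omega),
      Ioo_subset_Icc_self, subset_rfl,
      Icc_subset_Icc (a_nonneg S (by omega)) (a_le_one S (by omega)), hlen, hform⟩
  · obtain ⟨s, c, hlen, hform, _⟩ := S.hGJmid i hi
    have hlt : S.a (2 * i + 1) < S.a (2 * i + 2) := by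
      have := S.ha_lt (2 * i + 1) (by omega)
      rwa [show 2 * i + 1 + 1 = 2 * i + 2 by omega] at this
    exact Or.inr ⟨S.a (2 * i + 1), S.a (2 * i + 2), s, c, hlt,
      subset_rfl, Ioo_subset_Icc_self,
      Icc_subset_Icc (a_nonneg S (by omega)) (a_le_one S (by omega)), hlen, hform⟩
  · by_cases h0 : 0 < S.a 0
    · obtain ⟨s, c, hlen, hform, _⟩ := S.hGJleft h0
      refine Or.inr ⟨0, S.a 0, s, c, h0, Ioo_subset_Ico_self, Ico_subset_Icc_self,
        Icc_subset_Icc le_rfl (a_le_one S (by omega)), ?_, hform⟩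
      rwa [sub_zero]
    · exact Or.inl (Ico_eq_empty h0)
  · by_cases h1 : S.a (2 * S.kI - 1) < 1
    · obtain ⟨s, c, hlen, hform, _⟩ := S.hGJright h1
      exact Or.inr ⟨S.a (2 * S.kI - 1), 1, s, c, h1, Ioo_subset_Ioc_self, Ioc_subset_Icc_self,
        Icc_subset_Icc (a_nonneg S le_rfl) le_rfl, hlen, hform⟩
    · exact Or.inl (Ioc_eq_empty h1)

lemma piece_subset (S : CantorData) {P : Set ℝ} (hP : P ∈ S.PieceFamily) : P ⊆ Icc 0 1 := by
  rcases piece_spec S hP with rfl | ⟨p, q, s, c, _, _, hPIcc, hIcc01, _, _⟩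
  · exact empty_subset _
  · exact hPIcc.trans hIcc01

lemma piece_inter (S : CantorData) {P : Set ℝ} (hP : P ∈ S.PieceFamily) {A : Set ℝ}
    (hA : MeasurableSet A) (hA1 : A ⊆ Icc 0 1) :
    MeasurableSet (P ∩ S.G ⁻¹' A) ∧ volume (P ∩ S.G ⁻¹' A) = volume P * volume A := by
  rcases piece_spec S hP with rfl | ⟨p, q, s, c, hpq, hIooP, hPIcc, hIcc01, hlen, hform⟩
  · simp
  have hs : s ≠ 0 := by
    intro h; rw [h, abs_zero, zero_mul] at hlen; exact zero_ne_one hlen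
  have habs : |s⁻¹| = q - p := by
    rw [abs_inv]; exact inv_eq_of_mul_eq_one_right hlen
  have hpre : ∀ B : Set ℝ,
      volume ((fun x => s * x + c) ⁻¹' B) = ENNReal.ofReal (q - p) * volume B := by
    intro B
    have hcomp : (fun x => s * x + c) ⁻¹' B = (s * ·) ⁻¹' ((c + ·) ⁻¹' B) := by
      ext x; simp only [mem_preimage]; rw [add_comm]
    rw [hcomp, Real.volume_preimage_mul_left hs, measure_preimage_add, habs]
  have hIoo01 : Ioo p q ⊆ (fun x => s * x + c) ⁻¹' (Icc 0 1) := by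
    intro x hx
    have hxP := hIooP hx
    have h01 : S.G x ∈ Icc (0:ℝ) 1 := S.hGmaps (hIcc01 (hPIcc hxP))
    rw [hform x hxP] at h01
    exact h01
  have hnull : volume ((fun x => s * x + c) ⁻¹' (Icc 0 1) \ Ioo p q) = 0 := by
    have hv1 : volume ((fun x => s * x + c) ⁻¹' (Icc 0 1)) = ENNReal.ofReal (q - p) := by
      rw [hpre, Real.volume_Icc]; norm_num
    rw [measure_diff hIoo01 measurableSet_Ioo.nullMeasurableSet
      (by rw [Real.volume_Ioo]; exact ENNReal.ofReal_ne_top), hv1, Real.volume_Ioo, tsub_self]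
  have hPT : P ∩ S.G ⁻¹' A = P ∩ (fun x => s * x + c) ⁻¹' A := by
    ext x
    simp only [mem_inter_iff, mem_preimage]
    exact and_congr_right fun hx => by rw [hform x hx]
  have hmeasT : Measurable fun x : ℝ => s * x + c := (measurable_const_mul s).add_const c
  have hvolP : volume P = ENNReal.ofReal (q - p) := by
    apply le_antisymm
    · exact (measure_mono hPIcc).trans_eq (by rw [Real.volume_Icc])
    · calc ENNReal.ofReal (q - p) = volume (Ioo p q) := (Real.volume_Ioo).symm
        _ ≤ volume P := measure_mono hIooP
  have key : volume (P ∩ (fun x => s * x + c) ⁻¹' A) = ENNReal.ofReal (q - p) * volume A := by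
    apply le_antisymm
    · exact (measure_mono inter_subset_right).trans_eq (hpre A)
    · have hsplit : (fun x => s * x + c) ⁻¹' A ⊆
          (P ∩ (fun x => s * x + c) ⁻¹' A) ∪ ((fun x => s * x + c) ⁻¹' (Icc 0 1) \ Ioo p q) := by
        intro x hx
        by_cases hxI : x ∈ Ioo p q
        · exact Or.inl ⟨hIooP hxI, hx⟩
        · exact Or.inr ⟨preimage_mono hA1 hx, hxI⟩
      calc ENNReal.ofReal (q - p) * volume A = volume ((fun x => s * x + c) ⁻¹' A) :=
            (hpre A).symm
        _ ≤ volume (P ∩ (fun x => s * x + c) ⁻¹' A) +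
            volume ((fun x => s * x + c) ⁻¹' (Icc 0 1) \ Ioo p q) :=
            (measure_mono hsplit).trans (measure_union_le _ _)
        _ = volume (P ∩ (fun x => s * x + c) ⁻¹' A) := by rw [hnull, add_zero]
  have hmeas : MeasurableSet (P ∩ (fun x => s * x + c) ⁻¹' A) := by
    have hdecomp : P ∩ (fun x => s * x + c) ⁻¹' A =
        (Ioo p q ∩ (fun x => s * x + c) ⁻¹' A) ∪
        ((P \ Ioo p q) ∩ (fun x => s * x + c) ⁻¹' A) := by
      rw [← union_inter_distrib_right, union_diff_cancel hIooP]
    rw [hdecomp]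
    refine (measurableSet_Ioo.inter (hmeasT hA)).union ?_
    have hsub : (P \ Ioo p q) ∩ (fun x => s * x + c) ⁻¹' A ⊆ {p, q} := by
      intro x hx
      have hx' : x ∈ Icc p q \ Ioo p q := ⟨hPIcc hx.1.1, hx.1.2⟩
      rwa [Set.Icc_diff_Ioo_same hpq.le] at hx'
    exact (((Set.countable_singleton q).insert p).mono hsub).measurableSet
  exact ⟨hPT ▸ hmeas, by rw [hPT, key, hvolP]⟩

lemma icc_inter (S : CantorData) {A : Set ℝ} (hA : MeasurableSet A) (hA1 : A ⊆ Icc 0 1) :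
    MeasurableSet (Icc 0 1 ∩ S.G ⁻¹' A) ∧ volume (Icc 0 1 ∩ S.G ⁻¹' A) = volume A := by
  have hkI := S.hkI
  have hmemI : ∀ i < S.kI, Icc (S.a (2 * i)) (S.a (2 * i + 1)) ∈ S.PieceFamily :=
    fun i hi => Set.mem_union_left _ (Set.mem_union_left _ ⟨i, hi, rfl⟩)
  have hmemJ : ∀ i, i + 1 < S.kI → Ioo (S.a (2 * i + 1)) (S.a (2 * i + 2)) ∈ S.PieceFamily :=
    fun i hi => Set.mem_union_left _ (Set.mem_union_right _ ⟨i, hi, rfl⟩)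
  have hmemL : Ico (0:ℝ) (S.a 0) ∈ S.PieceFamily :=
    Set.mem_union_right _ (Set.mem_insert _ _)
  have hmemR : Ioc (S.a (2 * S.kI - 1)) 1 ∈ S.PieceFamily :=
    Set.mem_union_right _ (Set.mem_insert_of_mem _ rfl)
  have main : ∀ n, n ≤ 2 * S.kI - 1 → MeasurableSet (Ico 0 (S.a n) ∩ S.G ⁻¹' A) ∧
      volume (Ico 0 (S.a n) ∩ S.G ⁻¹' A) = ENNReal.ofReal (S.a n) * volume A := by
    intro n
    induction n with
    | zero =>
      intro _
      by_cases h0 : 0 < S.a 0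
      · have hp := piece_inter S hmemL hA hA1
        exact ⟨hp.1, by rw [hp.2, Real.volume_Ico, sub_zero]⟩
      · have h00 : S.a 0 = 0 := le_antisymm (not_lt.mp h0) S.ha0
        rw [h00]; simp
    | succ n ih =>
      intro hn
      have hmono : S.a n < S.a (n + 1) := S.ha_lt n (by omega)
      have h0n : 0 ≤ S.a n := a_nonneg S (by omega)
      obtain ⟨ihm, ihv⟩ := ih (by omega)
      have hmid : MeasurableSet (Ico (S.a n) (S.a (n + 1)) ∩ S.G ⁻¹' A) ∧
          volume (Ico (S.a n) (S.a (n + 1)) ∩ S.G ⁻¹' A) =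
            ENNReal.ofReal (S.a (n + 1) - S.a n) * volume A := by
        rcases Nat.even_or_odd n with ⟨i, hi⟩ | ⟨i, hi⟩
        · have h2 : n = 2 * i := by omega
          have hik : i < S.kI := by omega
          have hp := piece_inter S (hmemI i hik) hA hA1
          rw [h2]
          have he : Ico (S.a (2 * i)) (S.a (2 * i + 1)) ∩ S.G ⁻¹' A =
              (Icc (S.a (2 * i)) (S.a (2 * i + 1)) ∩ S.G ⁻¹' A) \ {S.a (2 * i + 1)} := by
            ext x
            simp only [mem_inter_iff, mem_Ico, mem_Icc, mem_diff, mem_singleton_iff,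
              mem_preimage]
            constructor
            · rintro ⟨⟨h1, h2'⟩, h3⟩; exact ⟨⟨⟨h1, h2'.le⟩, h3⟩, h2'.ne⟩
            · rintro ⟨⟨⟨h1, h2'⟩, h3⟩, h4⟩; exact ⟨⟨h1, lt_of_le_of_ne h2' h4⟩, h3⟩
          refine ⟨?_, ?_⟩
          · rw [he]; exact hp.1.diff (measurableSet_singleton _)
          · rw [he, measure_diff_null Real.volume_singleton, hp.2, Real.volume_Icc]
        · have h2 : n = 2 * i + 1 := hi
          have hik : i + 1 < S.kI := by omega
          have hp := piece_inter S (hmemJ i hik) hA hA1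
          rw [h2, show 2 * i + 1 + 1 = 2 * i + 2 by omega]
          have hlt : S.a (2 * i + 1) < S.a (2 * i + 2) := by
            have := S.ha_lt (2 * i + 1) (by omega)
            rwa [show 2 * i + 1 + 1 = 2 * i + 2 by omega] at this
          have he : Ico (S.a (2 * i + 1)) (S.a (2 * i + 2)) ∩ S.G ⁻¹' A =
              (Ioo (S.a (2 * i + 1)) (S.a (2 * i + 2)) ∩ S.G ⁻¹' A) ∪
              ({S.a (2 * i + 1)} ∩ S.G ⁻¹' A) := by
            ext x
            simp only [mem_inter_iff, mem_Ico, mem_Ioo, mem_union, mem_singleton_iff,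
              mem_preimage]
            constructor
            · rintro ⟨⟨h1, h2'⟩, h3⟩
              rcases eq_or_lt_of_le h1 with h | h
              · exact Or.inr ⟨h.symm, h3⟩
              · exact Or.inl ⟨⟨h, h2'⟩, h3⟩
            · rintro (⟨⟨h1, h2'⟩, h3⟩ | ⟨h1, h3⟩)
              · exact ⟨⟨h1.le, h2'⟩, h3⟩
              · exact ⟨⟨h1.ge, h1 ▸ hlt⟩, h3⟩
          refine ⟨?_, ?_⟩
          · rw [he]
            exact hp.1.union (((Set.countable_singleton _).mono inter_subset_left).measurableSet)
          · rw [he, vol_union_null (measure_mono_null inter_subset_left Real.volume_singleton),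
              hp.2, Real.volume_Ioo]
      have hsplit : Ico 0 (S.a (n + 1)) ∩ S.G ⁻¹' A =
          (Ico 0 (S.a n) ∩ S.G ⁻¹' A) ∪ (Ico (S.a n) (S.a (n + 1)) ∩ S.G ⁻¹' A) := by
        rw [← union_inter_distrib_right, Ico_union_Ico_eq_Ico h0n hmono.le]
      have hdisj : Disjoint (Ico 0 (S.a n) ∩ S.G ⁻¹' A) (Ico (S.a n) (S.a (n + 1)) ∩ S.G ⁻¹' A) :=
        (Set.Ico_disjoint_Ico_same).mono inter_subset_left inter_subset_left
      refine ⟨hsplit ▸ (ihm.union hmid.1), ?_⟩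
      rw [hsplit, measure_union hdisj hmid.1, ihv, hmid.2, ← add_mul,
        ← ENNReal.ofReal_add h0n (by linarith),
        show S.a n + (S.a (n + 1) - S.a n) = S.a (n + 1) by ring]
  have hm0 : 0 ≤ S.a (2 * S.kI - 1) := a_nonneg S le_rfl
  have hm1 : S.a (2 * S.kI - 1) ≤ 1 := S.ha1
  obtain ⟨hM, hV⟩ := main (2 * S.kI - 1) le_rfl
  have hright : MeasurableSet (Ioc (S.a (2 * S.kI - 1)) 1 ∩ S.G ⁻¹' A) ∧
      volume (Ioc (S.a (2 * S.kI - 1)) 1 ∩ S.G ⁻¹' A) =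
        ENNReal.ofReal (1 - S.a (2 * S.kI - 1)) * volume A := by
    by_cases h1 : S.a (2 * S.kI - 1) < 1
    · have hp := piece_inter S hmemR hA hA1
      exact ⟨hp.1, by rw [hp.2, Real.volume_Ioc]⟩
    · have he : S.a (2 * S.kI - 1) = 1 := le_antisymm hm1 (not_lt.mp h1)
      rw [he]; simp
  have hsplit2 : Icc (0:ℝ) 1 ∩ S.G ⁻¹' A =
      ((Ico 0 (S.a (2 * S.kI - 1)) ∩ S.G ⁻¹' A) ∪ (Ioc (S.a (2 * S.kI - 1)) 1 ∩ S.G ⁻¹' A)) ∪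
      ({S.a (2 * S.kI - 1)} ∩ S.G ⁻¹' A) := by
    have hdec : Icc (0:ℝ) 1 = (Ico 0 (S.a (2 * S.kI - 1)) ∪ Ioc (S.a (2 * S.kI - 1)) 1) ∪
        {S.a (2 * S.kI - 1)} := by
      ext x
      simp only [mem_union, mem_Icc, mem_Ico, mem_Ioc, mem_singleton_iff]
      constructor
      · rintro ⟨h0, h1'⟩
        rcases lt_trichotomy x (S.a (2 * S.kI - 1)) with h | h | h
        · exact Or.inl (Or.inl ⟨h0, h⟩)
        · exact Or.inr h
        · exact Or.inl (Or.inr ⟨h, h1'⟩)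
      · rintro ((⟨h0, h⟩ | ⟨h, h1'⟩) | rfl)
        · exact ⟨h0, h.le.trans hm1⟩
        · exact ⟨hm0.trans h.le, h1'⟩
        · exact ⟨hm0, hm1⟩
    rw [hdec, union_inter_distrib_right, union_inter_distrib_right]
  have hdisj2 : Disjoint (Ico 0 (S.a (2 * S.kI - 1)) ∩ S.G ⁻¹' A)
      (Ioc (S.a (2 * S.kI - 1)) 1 ∩ S.G ⁻¹' A) := by
    refine Disjoint.mono inter_subset_left inter_subset_left ?_
    rw [Set.disjoint_left]
    intro x hx hx'
    exact lt_asymm hx.2 hx'.1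
  constructor
  · rw [hsplit2]
    exact (hM.union hright.1).union
      (((Set.countable_singleton _).mono inter_subset_left).measurableSet)
  · rw [hsplit2, vol_union_null (measure_mono_null inter_subset_left Real.volume_singleton),
      measure_union hdisj2 hright.1, hV, hright.2, ← add_mul,
      ← ENNReal.ofReal_add hm0 (by linarith),
      show S.a (2 * S.kI - 1) + (1 - S.a (2 * S.kI - 1)) = 1 by ring,
      ENNReal.ofReal_one, one_mul]

lemma iter_inter (S : CantorData) : ∀ (j : ℕ) {A : Set ℝ}, MeasurableSet A → A ⊆ Icc 0 1 →
    MeasurableSet (Icc 0 1 ∩ (S.G^[j]) ⁻¹' A) ∧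
    volume (Icc 0 1 ∩ (S.G^[j]) ⁻¹' A) = volume A := by
  intro j
  induction j with
  | zero =>
    intro A hA hA1
    rw [Function.iterate_zero, Set.preimage_id, inter_eq_self_of_subset_right hA1]
    exact ⟨hA, rfl⟩
  | succ j ih =>
    intro A hA hA1
    obtain ⟨ihm, ihv⟩ := ih hA hA1
    have hstep : Icc (0:ℝ) 1 ∩ (S.G^[j + 1]) ⁻¹' A =
        Icc 0 1 ∩ S.G ⁻¹' (Icc 0 1 ∩ (S.G^[j]) ⁻¹' A) := by
      ext x
      simp only [mem_inter_iff, mem_preimage, Function.iterate_succ_apply]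
      constructor
      · rintro ⟨hx, hGx⟩; exact ⟨hx, S.hGmaps hx, hGx⟩
      · rintro ⟨hx, _, hGx⟩; exact ⟨hx, hGx⟩
    obtain ⟨hM2, hV2⟩ := icc_inter S ihm inter_subset_left
    exact ⟨hstep ▸ hM2, by rw [hstep, hV2, ihv]⟩

lemma cyl_zero (S : CantorData) (w : ℕ → Set ℝ) : S.Cyl 0 w = univ := by
  simp [CantorData.Cyl]

lemma cyl_succ (S : CantorData) (d : ℕ) (w : ℕ → Set ℝ) :
    S.Cyl (d + 1) w = w 0 ∩ S.G ⁻¹' (S.Cyl d (fun k => w (k + 1))) := by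
  ext x
  simp only [CantorData.Cyl, mem_iInter, Finset.mem_range, mem_inter_iff, mem_preimage]
  constructor
  · intro h
    refine ⟨by simpa using h 0 (by omega), fun k hk => ?_⟩
    have := h (k + 1) (by omega)
    rwa [Function.iterate_succ_apply] at this
  · rintro ⟨h0, h⟩ k hk
    match k with
    | 0 => simpa using h0
    | k + 1 =>
      rw [Function.iterate_succ_apply]
      exact h k (by omega)

lemma markov_aux (S : CantorData) : ∀ (d : ℕ) (w : ℕ → Set ℝ),
    (∀ k < d, w k ∈ S.PieceFamily) → ∀ j, d ≤ j → ∀ A : Set ℝ, MeasurableSet A → A ⊆ Icc 0 1 →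
    MeasurableSet (S.Cyl d w ∩ (S.G^[j]) ⁻¹' A ∩ Icc 0 1) ∧
    volume (S.Cyl d w ∩ (S.G^[j]) ⁻¹' A ∩ Icc 0 1) = volume (S.Cyl d w ∩ Icc 0 1) * volume A := by
  intro d
  induction d with
  | zero =>
    intro w _ j _ A hA hA1
    rw [cyl_zero S w, univ_inter, univ_inter]
    obtain ⟨hM, hV⟩ := iter_inter S j hA hA1
    constructor
    · rw [inter_comm]; exact hM
    · rw [inter_comm, hV, Real.volume_Icc]; simp
  | succ d ih =>
    intro w hw j hj A hA hA1
    obtain ⟨j', rfl⟩ : ∃ j'', j = j'' + 1 := ⟨j - 1, by omega⟩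
    have hw' : ∀ k < d, (fun k => w (k + 1)) k ∈ S.PieceFamily := fun k hk => hw (k + 1) (by omega)
    have hP : w 0 ∈ S.PieceFamily := hw 0 (by omega)
    have hPsub : w 0 ⊆ Icc 0 1 := piece_subset S hP
    obtain ⟨M1, V1⟩ := ih (fun k => w (k + 1)) hw' j' (by omega) A hA hA1
    obtain ⟨M2, V2⟩ := ih (fun k => w (k + 1)) hw' d le_rfl (Icc 0 1) measurableSet_Icc subset_rfl
    have hB2 : S.Cyl d (fun k => w (k + 1)) ∩ (S.G^[d]) ⁻¹' (Icc 0 1) ∩ Icc 0 1 =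
        S.Cyl d (fun k => w (k + 1)) ∩ Icc 0 1 := by
      ext x
      simp only [mem_inter_iff, mem_preimage]
      constructor
      · rintro ⟨⟨h1, _⟩, h2⟩; exact ⟨h1, h2⟩
      · rintro ⟨h1, h2⟩; exact ⟨⟨h1, (S.hGmaps.iterate d) h2⟩, h2⟩
    rw [hB2] at M2
    have key1 : S.Cyl (d + 1) w ∩ (S.G^[j' + 1]) ⁻¹' A ∩ Icc 0 1 =
        w 0 ∩ S.G ⁻¹' (S.Cyl d (fun k => w (k + 1)) ∩ (S.G^[j']) ⁻¹' A ∩ Icc 0 1) := by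
      rw [cyl_succ S d w]
      ext x
      simp only [mem_inter_iff, mem_preimage]
      constructor
      · rintro ⟨⟨⟨hx0, hxc⟩, hxA⟩, _⟩
        have hx01 : x ∈ Icc (0:ℝ) 1 := hPsub hx0
        refine ⟨hx0, ⟨hxc, ?_⟩, S.hGmaps hx01⟩
        rwa [Function.iterate_succ_apply] at hxA
      · rintro ⟨hx0, ⟨hxc, hxA⟩, _⟩
        have hx01 : x ∈ Icc (0:ℝ) 1 := hPsub hx0
        exact ⟨⟨⟨hx0, hxc⟩, by rwa [Function.iterate_succ_apply]⟩, hx01⟩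
    have key2 : S.Cyl (d + 1) w ∩ Icc 0 1 =
        w 0 ∩ S.G ⁻¹' (S.Cyl d (fun k => w (k + 1)) ∩ Icc 0 1) := by
      rw [cyl_succ S d w]
      ext x
      simp only [mem_inter_iff, mem_preimage]
      constructor
      · rintro ⟨⟨hx0, hxc⟩, _⟩
        exact ⟨hx0, hxc, S.hGmaps (hPsub hx0)⟩
      · rintro ⟨hx0, hxc, _⟩
        exact ⟨⟨hx0, hxc⟩, hPsub hx0⟩
    obtain ⟨PM1, PV1⟩ := piece_inter S hP M1 inter_subset_right
    obtain ⟨PM2, PV2⟩ := piece_inter S hP M2 inter_subset_right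
    constructor
    · rw [key1]; exact PM1
    · rw [key1, key2, PV1, PV2, V1, mul_assoc]

end Helpers

/-- exact Markov independence on cylinders: for every depth-`d` word
`w`, every `j ≥ d` and every Borel `A ⊆ [0,1]`,
`𝔪(C_w ∩ G^{-j}(A)) = 𝔪(C_w) 𝔪(A)`. -/
theorem exact_markov_independence (S : CantorData) (d : ℕ) (w : ℕ → Set ℝ)
    (hw : ∀ k < d, w k ∈ S.PieceFamily) (j : ℕ) (hj : d ≤ j)
    (A : Set ℝ) (hA : MeasurableSet A) (hA1 : A ⊆ Set.Icc 0 1) :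
    S.mes (S.Cyl d w ∩ (S.G^[j]) ⁻¹' A) = S.mes (S.Cyl d w) * S.mes A := by
  have h1 : S.mes (S.Cyl d w ∩ (S.G^[j]) ⁻¹' A) =
      volume (S.Cyl d w ∩ (S.G^[j]) ⁻¹' A ∩ Icc 0 1) := by
    simp only [CantorData.mes]
    rw [Measure.restrict_apply' measurableSet_Icc]
  have h2 : S.mes (S.Cyl d w) = volume (S.Cyl d w ∩ Icc 0 1) := by
    simp only [CantorData.mes]
    rw [Measure.restrict_apply' measurableSet_Icc]
  have h3 : S.mes A = volume A := by
    simp only [CantorData.mes]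
    rw [Measure.restrict_apply' measurableSet_Icc, inter_eq_self_of_subset_left hA1]
  rw [h1, h2, h3, (markov_aux S d w hw j hj A hA hA1).2]
end
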